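/- If μ₁ is an eigenvalue of the Laplacian L₁ of graph G with eigenvector w₁, and μ₂ is an eigenvalue of the Laplacian L₂ of graph H with eigenvector w₂, and if additionally both graphs are regular with degrees d₁ and d₂ (so D₁ = d₁I, D₂ = d₂I), then w₁ ⊗ w₂ is an exact eigenvector of L_{S₁⊗S₂} with eigenvalue μ₁d₂ + d₁μ₂ − μ₁μ₂. -/
import Mathlib


open Matrix
open scoped Kronecker BigOperators

/-- The degree matrix of a weighted graph: diagonal matrix of row sums. -/
noncomputable def degreeMatrix {n : Type*} [Fintype n] [DecidableEq n]
    (S : Matrix n n ℝ) : Matrix n n ℝ :=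
  Matrix.diagonal fun i => ∑ j, S i j

/-- The Laplacian of a weighted graph with similarity matrix `S`. -/
noncomputable def laplacian {n : Type*} [Fintype n] [DecidableEq n]
    (S : Matrix n n ℝ) : Matrix n n ℝ :=
  degreeMatrix S - S

/-- The Kronecker product of vectors. -/
def kronVec {n₁ n₂ : ℕ} (w₁ : Fin n₁ → ℝ) (w₂ : Fin n₂ → ℝ) : Fin n₁ × Fin n₂ → ℝ :=
  fun p => w₁ p.1 * w₂ p.2

/-- If `μ₁, w₁` is a Laplacian eigenpair of a `d₁`-regular graph `G` and `μ₂, w₂` a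
Laplacian eigenpair of a `d₂`-regular graph `H`, then `w₁ ⊗ w₂` is an exact
eigenvector of `L_{S₁⊗S₂}` with eigenvalue `μ₁d₂ + d₁μ₂ − μ₁μ₂`. -/
theorem laplacian_kronecker_regular_eigenvector {n₁ n₂ : ℕ}
    (S₁ : Matrix (Fin n₁) (Fin n₁) ℝ) (S₂ : Matrix (Fin n₂) (Fin n₂) ℝ)
    (hS₁ : S₁.IsSymm) (hS₂ : S₂.IsSymm)
    (hS₁0 : ∀ i j, 0 ≤ S₁ i j) (hS₂0 : ∀ i j, 0 ≤ S₂ i j)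
    (d₁ d₂ : ℝ)
    (hreg₁ : ∀ i, ∑ j, S₁ i j = d₁) (hreg₂ : ∀ k, ∑ l, S₂ k l = d₂)
    (μ₁ μ₂ : ℝ) (w₁ : Fin n₁ → ℝ) (w₂ : Fin n₂ → ℝ)
    (hw₁ : w₁ ≠ 0) (hw₂ : w₂ ≠ 0)
    (he₁ : (laplacian S₁).mulVec w₁ = μ₁ • w₁)
    (he₂ : (laplacian S₂).mulVec w₂ = μ₂ • w₂) :
    kronVec w₁ w₂ ≠ 0 ∧
      (laplacian (S₁ ⊗ₖ S₂)).mulVec (kronVec w₁ w₂) =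
        (μ₁ * d₂ + d₁ * μ₂ - μ₁ * μ₂) • kronVec w₁ w₂ := by
  have hS₁w : ∀ i, ∑ j, S₁ i j * w₁ j = (d₁ - μ₁) * w₁ i := by
    intro i
    have := congrFun he₁ i
    have h1 : (Matrix.diagonal fun i => ∑ j, S₁ i j).mulVec w₁ i = d₁ * w₁ i := by
      simp [mulVec_diagonal, hreg₁]
    rw [show (laplacian S₁).mulVec w₁ i
        = (Matrix.diagonal fun i => ∑ j, S₁ i j).mulVec w₁ i - S₁.mulVec w₁ i by
      simp [laplacian, degreeMatrix, sub_mulVec], h1] at this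
    have : d₁ * w₁ i - ∑ j, S₁ i j * w₁ j = μ₁ * w₁ i := by
      simpa [mulVec, dotProduct] using this
    linarith
  have hS₂w : ∀ k, ∑ l, S₂ k l * w₂ l = (d₂ - μ₂) * w₂ k := by
    intro k
    have := congrFun he₂ k
    have h1 : (Matrix.diagonal fun k => ∑ l, S₂ k l).mulVec w₂ k = d₂ * w₂ k := by
      simp [mulVec_diagonal, hreg₂]
    rw [show (laplacian S₂).mulVec w₂ k
        = (Matrix.diagonal fun k => ∑ l, S₂ k l).mulVec w₂ k - S₂.mulVec w₂ k by
      simp [laplacian, degreeMatrix, sub_mulVec], h1] at this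
    have : d₂ * w₂ k - ∑ l, S₂ k l * w₂ l = μ₂ * w₂ k := by
      simpa [mulVec, dotProduct] using this
    linarith
  constructor
  · obtain ⟨i, hi⟩ := Function.ne_iff.mp hw₁
    obtain ⟨k, hk⟩ := Function.ne_iff.mp hw₂
    intro h
    have := congrFun h (i, k)
    simp [kronVec] at this
    rcases this with h | h
    · exact hi h
    · exact hk h
  · funext p
    obtain ⟨i, k⟩ := p
    have hrow : ∑ q : Fin n₁ × Fin n₂, (S₁ ⊗ₖ S₂) (i, k) q = d₁ * d₂ := by
      rw [Fintype.sum_prod_type]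
      simp only [kroneckerMap_apply]
      rw [← Finset.sum_mul_sum]
      rw [hreg₁, hreg₂]
    have hsum : ∑ q : Fin n₁ × Fin n₂, (S₁ ⊗ₖ S₂) (i, k) q * kronVec w₁ w₂ q
        = ((d₁ - μ₁) * w₁ i) * ((d₂ - μ₂) * w₂ k) := by
      rw [Fintype.sum_prod_type]
      simp only [kroneckerMap_apply, kronVec]
      rw [← hS₁w i, ← hS₂w k, Finset.sum_mul_sum]
      congr 1; funext j; congr 1; funext l; ring
    have hdiag : (degreeMatrix (S₁ ⊗ₖ S₂)).mulVec (kronVec w₁ w₂) (i, k)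
        = d₁ * d₂ * kronVec w₁ w₂ (i, k) := by
      rw [degreeMatrix, mulVec_diagonal, hrow]
    have : (laplacian (S₁ ⊗ₖ S₂)).mulVec (kronVec w₁ w₂) (i, k)
        = d₁ * d₂ * kronVec w₁ w₂ (i, k)
          - ((d₁ - μ₁) * w₁ i) * ((d₂ - μ₂) * w₂ k) := by
      rw [show (laplacian (S₁ ⊗ₖ S₂)).mulVec (kronVec w₁ w₂) (i, k)
          = (degreeMatrix (S₁ ⊗ₖ S₂)).mulVec (kronVec w₁ w₂) (i, k)
            - (S₁ ⊗ₖ S₂).mulVec (kronVec w₁ w₂) (i, k) by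
        simp [laplacian, sub_mulVec], hdiag,
        show (S₁ ⊗ₖ S₂).mulVec (kronVec w₁ w₂) (i, k)
          = ((d₁ - μ₁) * w₁ i) * ((d₂ - μ₂) * w₂ k) by
          simpa [mulVec, dotProduct] using hsum]
    rw [this]
    simp only [Pi.smul_apply, smul_eq_mul, kronVec]
    ring
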